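/- Let N ≥ 1, let S ⊆ ℝ^N be compact, let h ∈ B_S, let D_1, …, D_M ⊆ ℝ^N be measurable sets, and let ω_1, …, ω_M ∈ (0,1] with ω_1 + ⋯ + ω_M = 1. Then the operator T_h f = Σ_{m=1}^M ω_m P_S(f + χ_{D_m}(h − f)) is firmly nonexpansive on B_S: for all f, g ∈ B_S, ‖T_h f − T_h g‖² ≤ ⟨f − g, T_h f − T_h g⟩. -/

import Mathlib

open MeasureTheory FourierTransform Filter

noncomputable section

/-- The Hilbert space `L²(ℝᴺ; ℂ)` of square-integrable functions on `ℝᴺ`. -/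
abbrev L2Space (N : ℕ) : Type :=
  Lp ℂ 2 (volume : Measure (EuclideanSpace ℝ (Fin N)))

/-- `f ∈ L²(ℝᴺ)` is bandlimited to `S`: its Fourier transform vanishes (a.e.) outside `S`;
equivalently, `f` agrees a.e. with the inverse Fourier transform of an integrable function `F`
vanishing outside `S`. -/
def IsBandlimited {N : ℕ} (S : Set (EuclideanSpace ℝ (Fin N))) (f : L2Space N) : Prop :=
  ∃ F : EuclideanSpace ℝ (Fin N) → ℂ,
    Integrable F ∧ (∀ k, k ∉ S → F k = 0) ∧
      (f : EuclideanSpace ℝ (Fin N) → ℂ) =ᵐ[volume] 𝓕⁻ F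

/-- Multiplication of `f ∈ L²` by the indicator function `χ_D`, as an element of `L²`. -/
def chiMul {N : ℕ} {D : Set (EuclideanSpace ℝ (Fin N))} (hD : MeasurableSet D)
    (f : L2Space N) : L2Space N :=
  ((Lp.memLp f).indicator hD).toLp (D.indicator f)

/-- The orthogonal projection of `L²(ℝᴺ)` onto a closed subspace `K`. -/
def projOf {N : ℕ} (K : Submodule ℂ (L2Space N)) (hK : IsClosed (K : Set (L2Space N))) :
    L2Space N → L2Space N :=
  haveI : CompleteSpace K := hK.completeSpace_coe
  fun f => (K.orthogonalProjection f : L2Space N)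

/-- The operator `T_h^{(D)} f = P_S (f + χ_D (h − f))` (single region). -/
def Tsingle {N : ℕ} (K : Submodule ℂ (L2Space N)) (hK : IsClosed (K : Set (L2Space N)))
    {D : Set (EuclideanSpace ℝ (Fin N))} (hD : MeasurableSet D)
    (h f : L2Space N) : L2Space N :=
  projOf K hK (f + chiMul hD (h - f))

/-- The operator `T_h f = ∑ m, ω m • P_S (f + χ_{D m} (h − f))` (multiple weighted regions). -/
def Tmulti {N : ℕ} (K : Submodule ℂ (L2Space N)) (hK : IsClosed (K : Set (L2Space N)))
    {M : ℕ} {D : Fin M → Set (EuclideanSpace ℝ (Fin N))} (hD : ∀ m, MeasurableSet (D m))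
    (ω : Fin M → ℝ) (h f : L2Space N) : L2Space N :=
  ∑ m, ω m • projOf K hK (f + chiMul (hD m) (h - f))

/-! For `u = f - g ∈ B_S`, the map `f ↦ f + χ_D (h - f)` sends the difference to
`u - χ_D u = χ_{Dᶜ} u`, and `χ_{Dᶜ}` is an orthogonal projection, so this map is firmly
nonexpansive. Composing with `P_S` preserves this on `B_S`, since `P_S` is self-adjoint, contracts
norms, and fixes `u`. Finally, convexity of `‖·‖²` makes any convex combination of firmly
nonexpansive maps firmly nonexpansive. -/

section FirmlyNonexpansive

variable {𝕜 E : Type*} [RCLike 𝕜] [NormedAddCommGroup E] [InnerProductSpace 𝕜 E]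

variable (𝕜) in
def FirmlyNonexpansiveOn (T : E → E) (s : Set E) : Prop :=
  ∀ x ∈ s, ∀ y ∈ s, ‖T x - T y‖ ^ 2 ≤ RCLike.re (inner 𝕜 (x - y) (T x - T y))

theorem FirmlyNonexpansiveOn.mono {T : E → E} {s t : Set E}
    (hT : FirmlyNonexpansiveOn 𝕜 T t) (hst : s ⊆ t) : FirmlyNonexpansiveOn 𝕜 T s :=
  fun x hx y hy => hT x (hst hx) y (hst hy)

theorem FirmlyNonexpansiveOn.sum_smul [NormedSpace ℝ E] [IsScalarTower ℝ 𝕜 E] {ι : Type*}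
    {t : Finset ι} {T : ι → E → E} {s : Set E} (hT : ∀ i ∈ t, FirmlyNonexpansiveOn 𝕜 (T i) s)
    {ω : ι → ℝ} (hω₀ : ∀ i ∈ t, 0 ≤ ω i) (hω₁ : ∑ i ∈ t, ω i = 1) :
    FirmlyNonexpansiveOn 𝕜 (fun x => ∑ i ∈ t, ω i • T i x) s := by
  intro x hx y hy
  set v : ι → E := fun i => T i x - T i y
  have hdiff : ∑ i ∈ t, ω i • T i x - ∑ i ∈ t, ω i • T i y = ∑ i ∈ t, ω i • v i := by
    simp only [v, smul_sub, Finset.sum_sub_distrib]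
  have hconvex : ‖∑ i ∈ t, ω i • v i‖ ^ 2 ≤ ∑ i ∈ t, ω i * ‖v i‖ ^ 2 :=
    (convexOn_univ_norm.pow (fun _ _ => norm_nonneg _) 2).map_sum_le hω₀ hω₁
      (fun _ _ => Set.mem_univ _)
  calc ‖∑ i ∈ t, ω i • T i x - ∑ i ∈ t, ω i • T i y‖ ^ 2
      ≤ ∑ i ∈ t, ω i * ‖v i‖ ^ 2 := hdiff ▸ hconvex
    _ ≤ ∑ i ∈ t, ω i * RCLike.re (inner 𝕜 (x - y) (v i)) :=
      Finset.sum_le_sum fun i hi => mul_le_mul_of_nonneg_left (hT i hi x hx y hy) (hω₀ i hi)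
    _ = RCLike.re (inner 𝕜 (x - y) (∑ i ∈ t, ω i • T i x - ∑ i ∈ t, ω i • T i y)) := by
      rw [hdiff, inner_sum, map_sum]
      refine Finset.sum_congr rfl fun i _ => ?_
      rw [RCLike.real_smul_eq_coe_smul (K := 𝕜), inner_smul_real_right, RCLike.smul_re]

theorem FirmlyNonexpansiveOn.starProjection_comp (K : Submodule 𝕜 E) [K.HasOrthogonalProjection]
    {A : E → E} {s : Set E} (hA : FirmlyNonexpansiveOn 𝕜 A s) (hsK : s ⊆ K) :
    FirmlyNonexpansiveOn 𝕜 (K.starProjection ∘ A) s := by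
  intro x hx y hy
  have hxy : x - y ∈ K := K.sub_mem (hsK hx) (hsK hy)
  simp only [Function.comp_apply, ← map_sub]
  calc ‖K.starProjection (A x - A y)‖ ^ 2 ≤ ‖A x - A y‖ ^ 2 := by
        gcongr; exact K.norm_starProjection_apply_le _
    _ ≤ RCLike.re (inner 𝕜 (x - y) (A x - A y)) := hA x hx y hy
    _ = RCLike.re (inner 𝕜 (x - y) (K.starProjection (A x - A y))) := by
      rw [← K.inner_starProjection_left_eq_right, K.starProjection_eq_self_iff.mpr hxy]

theorem norm_sub_sq_eq_re_inner_sub {x y : E} (h : inner 𝕜 x y = inner 𝕜 y y) :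
    ‖x - y‖ ^ 2 = RCLike.re (inner 𝕜 x (x - y)) := by
  have hre : RCLike.re (inner 𝕜 x y) = ‖y‖ ^ 2 := by rw [h, inner_self_eq_norm_sq]
  rw [@norm_sub_sq 𝕜, inner_sub_right, map_sub, inner_self_eq_norm_sq, hre]
  ring

end FirmlyNonexpansive

section IndicatorMultiplication

variable {N : ℕ} {D : Set (EuclideanSpace ℝ (Fin N))} (hD : MeasurableSet D)

theorem chiMul_ae_eq (f : L2Space N) : chiMul hD f =ᵐ[volume] D.indicator f :=
  MemLp.coeFn_toLp _

theorem chiMul_sub (f g : L2Space N) : chiMul hD (f - g) = chiMul hD f - chiMul hD g := by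
  ext1
  filter_upwards [chiMul_ae_eq hD (f - g), chiMul_ae_eq hD f, chiMul_ae_eq hD g,
    Lp.coeFn_sub f g, Lp.coeFn_sub (chiMul hD f) (chiMul hD g)] with x h₁ h₂ h₃ h₄ h₅
  rw [h₅, h₁, Pi.sub_apply, h₂, h₃]
  by_cases hxD : x ∈ D
  · rw [Set.indicator_of_mem hxD, Set.indicator_of_mem hxD, Set.indicator_of_mem hxD, h₄,
      Pi.sub_apply]
  · rw [Set.indicator_of_notMem hxD, Set.indicator_of_notMem hxD, Set.indicator_of_notMem hxD,
      sub_zero]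

theorem inner_chiMul_self (f : L2Space N) :
    inner ℂ f (chiMul hD f) = inner ℂ (chiMul hD f) (chiMul hD f) := by
  rw [L2.inner_def, L2.inner_def]
  refine integral_congr_ae ?_
  filter_upwards [chiMul_ae_eq hD f] with x hx
  rw [hx]
  by_cases hxD : x ∈ D <;> simp [hxD]

theorem firmlyNonexpansiveOn_add_chiMul_sub (h : L2Space N) :
    FirmlyNonexpansiveOn ℂ (fun f => f + chiMul hD (h - f)) Set.univ := by
  intro f _ g _
  have hdiff : f + chiMul hD (h - f) - (g + chiMul hD (h - g)) = f - g - chiMul hD (f - g) := by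
    simp only [chiMul_sub]
    abel
  rw [hdiff]
  exact (norm_sub_sq_eq_re_inner_sub (inner_chiMul_self hD _)).le

end IndicatorMultiplication

theorem firmly_nonexpansive_multi_general (N : ℕ)
    (S : Set (EuclideanSpace ℝ (Fin N)))
    (K : Submodule ℂ (L2Space N))
    (hKset : (K : Set (L2Space N)) = {f : L2Space N | IsBandlimited S f})
    (hK : IsClosed (K : Set (L2Space N)))
    (h : L2Space N)
    (M : ℕ) (D : Fin M → Set (EuclideanSpace ℝ (Fin N))) (hD : ∀ m, MeasurableSet (D m))
    (ω : Fin M → ℝ) (hω : ∀ m, ω m ∈ Set.Ioc (0 : ℝ) 1) (hωsum : ∑ m, ω m = 1) :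
    ∀ f g : L2Space N, IsBandlimited S f → IsBandlimited S g →
      ‖Tmulti K hK hD ω h f - Tmulti K hK hD ω h g‖ ^ 2 ≤
        (inner ℂ (f - g) (Tmulti K hK hD ω h f - Tmulti K hK hD ω h g) : ℂ).re := by
  intro f g hf hg
  have : CompleteSpace K := hK.completeSpace_coe
  have hT : ∀ m ∈ Finset.univ,
      FirmlyNonexpansiveOn ℂ (Tsingle K hK (hD m) h) {f | IsBandlimited S f} := fun m _ =>
    ((firmlyNonexpansiveOn_add_chiMul_sub (hD m) h).mono (Set.subset_univ _)).starProjection_comp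
      K hKset.ge
  exact FirmlyNonexpansiveOn.sum_smul hT (fun m _ => (hω m).1.le) hωsum f hf g hg

/-- For `h ∈ B_S`, measurable sets `D_1, …, D_M` and convex weights
`ω_m ∈ (0,1]` with `∑ ω_m = 1`, the operator `T_h f = ∑ m, ω_m P_S(f + χ_{D_m}(h − f))`
is firmly nonexpansive on `B_S`. -/
theorem firmly_nonexpansive_multi (N : ℕ) (hN : 1 ≤ N)
    (S : Set (EuclideanSpace ℝ (Fin N))) (hS : IsCompact S)
    (K : Submodule ℂ (L2Space N))
    (hKset : (K : Set (L2Space N)) = {f : L2Space N | IsBandlimited S f})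
    (hK : IsClosed (K : Set (L2Space N)))
    (h : L2Space N) (hh : IsBandlimited S h)
    (M : ℕ) (D : Fin M → Set (EuclideanSpace ℝ (Fin N))) (hD : ∀ m, MeasurableSet (D m))
    (ω : Fin M → ℝ) (hω : ∀ m, ω m ∈ Set.Ioc (0 : ℝ) 1) (hωsum : ∑ m, ω m = 1) :
    ∀ f g : L2Space N, IsBandlimited S f → IsBandlimited S g →
      ‖Tmulti K hK hD ω h f - Tmulti K hK hD ω h g‖ ^ 2 ≤
        (inner ℂ (f - g) (Tmulti K hK hD ω h f - Tmulti K hK hD ω h g) : ℂ).re :=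
  firmly_nonexpansive_multi_general N S K hKset hK h M D hD ω hω hωsum
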